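/- arXiv:2601.09602 — 2 statements merged into one kernel-verified Lean document; each statement's English description precedes it below -/
import Mathlib

section
/- Let G be a finite group with an abelian Sylow p-subgroup P of order divisible by p (i.e., P nontrivial). Then G contains a non-Schur p-element. -/
/-- A non-Schur element of a group `G` is an element `x` with
`x ∉ [C_G(x), C_G(x)]`. -/
def IsNonSchur {G : Type*} [Group G] (x : G) : Prop :=
  x ∉ ⁅Subgroup.centralizer {x}, Subgroup.centralizer {x}⁆

/-- A `p`-element is an element of `p`-power order. -/
def IsPElement (p : ℕ) {G : Type*} [Group G] (x : G) : Prop :=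
  ∃ n : ℕ, orderOf x = p ^ n

/-!
Take `x` of order `p` in the abelian Sylow subgroup `P` and let `H = C_G(x)`. Then `P ≤ H` is an
abelian Sylow subgroup of `H` and `x` is central in `H`, so the transfer `H → P` sends `x` to
`x ^ [H : P]`, which is nontrivial because `[H : P]` is prime to `p`. The transfer kills `[H, H]`,
hence `x ∉ [H, H]`.
-/

open Subgroup

section

variable {G : Type*} [Group G]

open scoped IsMulCommutative in
theorem MonoidHom.coe_transfer_id_of_mem_center (H : Subgroup G) [IsMulCommutative H]
    [H.FiniteIndex] {g : G} (hg : g ∈ center G) :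
    ((transfer (MonoidHom.id H) g : H) : G) = g ^ H.index := by
  rw [transfer_eq_pow (MonoidHom.id H) g fun k g₀ _ => by
    rw [mul_assoc, ← mem_center_iff.mp (pow_mem hg k) g₀, inv_mul_cancel_left]]
  rfl

open scoped IsMulCommutative in
theorem Subgroup.notMem_commutator_of_mem_center (H : Subgroup G) [IsMulCommutative H]
    [H.FiniteIndex] {g : G} (hg : g ∈ center G) (hpow : g ^ H.index ≠ 1) :
    g ∉ _root_.commutator G := fun hcomm => hpow <| by
  rw [← MonoidHom.coe_transfer_id_of_mem_center H hg,
    Abelianization.commutator_subset_ker _ hcomm, OneMemClass.coe_one]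

theorem Sylow.notMem_commutator_of_mem_center {p : ℕ} [Fact p.Prime] (P : Sylow p G)
    [IsMulCommutative (P : Subgroup G)] [P.FiniteIndex] {g : G} (hg : g ∈ center G)
    (hp : p ∣ orderOf g) : g ∉ _root_.commutator G := by
  refine Subgroup.notMem_commutator_of_mem_center (P : Subgroup G) hg fun hpow => ?_
  exact P.not_dvd_index (hp.trans (orderOf_dvd_of_pow_eq_one hpow))

theorem Subgroup.coe_mem_commutator_iff (H : Subgroup G) (h : H) :
    (h : G) ∈ ⁅H, H⁆ ↔ h ∈ _root_.commutator H := by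
  rw [← map_subtype_commutator, ← coe_subtype, mem_map_iff_mem H.subtype_injective]

theorem Subgroup.mem_center_centralizer_singleton (x : G) :
    (⟨x, mem_centralizer_singleton_iff.mpr rfl⟩ : centralizer {x}) ∈ center (centralizer {x}) :=
  mem_center_iff.mpr fun h => Subtype.ext (mem_centralizer_singleton_iff.mp h.2)

end

theorem nonSchur_of_abelian_sylow (p : ℕ) (hp : p.Prime) (G : Type*) [Group G] [Finite G]
    (P : Sylow p G) (hab : IsMulCommutative ↥(P : Subgroup G)) (hdvd : p ∣ Nat.card ↥(P : Subgroup G)) :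
    ∃ x : G, IsPElement p x ∧ IsNonSchur x := by
  have : Fact p.Prime := ⟨hp⟩
  obtain ⟨x, hx⟩ := exists_prime_orderOf_dvd_card' (G := P) p hdvd
  have hxp : orderOf (x : G) = p := by rw [orderOf_coe, hx]
  have hPH : (P : Subgroup G) ≤ centralizer {(x : G)} :=
    (le_centralizer _).trans (centralizer_le (Set.singleton_subset_iff.mpr x.2))
  have : IsMulCommutative (P.subtype hPH) := subgroupOf_isMulCommutative _ _
  refine ⟨x, ⟨1, by rw [pow_one, hxp]⟩, fun hmem => ?_⟩
  exact (P.subtype hPH).notMem_commutator_of_mem_center (mem_center_centralizer_singleton _)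
    (by rw [orderOf_mk, hxp]) ((coe_mem_commutator_iff _ _).mp hmem)
end

section
/- Let G be a finite group, p a prime, P a Sylow p-subgroup of G, and suppose [P,P] is contained in a normal p-subgroup N of G. If p divides |G|, then G contains a non-Schur p-element. -/
/-!
If no `p`-element were non-Schur, then every `p`-element `x` would lie in `[C, C]` with
`C = C_G(x)`. Since `x` is central in `C`, the transfer `C → Q/[Q, Q]` to a Sylow `p`-subgroup `Q`
of `C` sends `x` to the class of `x ^ [C : Q]`, and it kills `[C, C]`; as `[C : Q]` is prime to
the order of `x`, this puts `x` in `[Q, Q]`, hence in `[P', P']` for a Sylow `p`-subgroup `P'` of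
`G`. All these lie in `N`, so every Sylow `p`-subgroup lies in `N`, and then `N ≤ [N, N]`. A
perfect `p`-group is trivial, contradicting `p ∣ |G|`.
-/

open Subgroup
open scoped Pointwise

section

variable {G : Type*} [Group G] {p : ℕ}

theorem IsPGroup.isPElement_of_mem [Fact p.Prime] {H : Subgroup G} (hH : IsPGroup p H) {x : G}
    (hx : x ∈ H) : IsPElement p x := by
  obtain ⟨n, hn⟩ := IsPGroup.iff_orderOf.mp hH ⟨x, hx⟩
  exact ⟨n, by rw [← hn, orderOf_mk]⟩

theorem IsPGroup.eq_bot_of_le_commutator [Finite G] [Fact p.Prime] {H : Subgroup G}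
    (hH : IsPGroup p H) (hperfect : H ≤ ⁅H, H⁆) : H = ⊥ := by
  by_contra hne
  have : Nontrivial H := (nontrivial_iff_ne_bot H).mpr hne
  have := hH.isNilpotent
  have hlt : ⁅H, H⁆ < H := by
    rw [← H.range_subtype, MonoidHom.range_eq_map, ← map_commutator, map_subtype_lt_map_subtype]
    exact Group.IsSolvable.commutator_lt_top_of_nontrivial H
  exact hlt.not_ge hperfect

theorem Subgroup.commutator_conj_smul_le {H N : Subgroup G} [N.Normal] (h : ⁅H, H⁆ ≤ N) (g : G) :
    ⁅MulAut.conj g • H, MulAut.conj g • H⁆ ≤ N := by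
  have hmap (K : Subgroup G) : MulAut.conj g • K = K.map (MulAut.conj g).toMonoidHom := rfl
  rw [hmap, ← map_commutator, ← hmap, ← Normal.conj_smul_eq_self g N]
  exact pointwise_smul_le_pointwise_smul_iff.mpr h

theorem Sylow.commutator_le_of_normal [Finite G] [Fact p.Prime] {N : Subgroup G} [N.Normal]
    {P : Sylow p G} (hPN : ⁅(P : Subgroup G), (P : Subgroup G)⁆ ≤ N) (Q : Sylow p G) :
    ⁅(Q : Subgroup G), (Q : Subgroup G)⁆ ≤ N := by
  obtain ⟨g, rfl⟩ := MulAction.exists_smul_eq G P Q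
  exact commutator_conj_smul_le hPN g

theorem Sylow.mem_commutator_of_mem_center_of_mem_commutator [Finite G] [hp : Fact p.Prime]
    (Q : Sylow p G) {x : G} (hxc : x ∈ center G) (hx : IsPElement p x)
    (hxG : x ∈ commutator G) : x ∈ ⁅(Q : Subgroup G), (Q : Subgroup G)⁆ := by
  have hconj (k : ℕ) (g₀ : G) (_ : g₀⁻¹ * x ^ k * g₀ ∈ (Q : Subgroup G)) :
      g₀⁻¹ * x ^ k * g₀ = x ^ k := by
    rw [mul_assoc, ← mem_center_iff.mp (pow_mem hxc k) g₀, inv_mul_cancel_left]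
  have htransfer := MonoidHom.transfer_eq_pow (Abelianization.of (G := Q)) x hconj
  rw [Abelianization.commutator_subset_ker _ hxG, eq_comm, ← MonoidHom.mem_ker,
    Abelianization.ker_of] at htransfer
  replace htransfer := mem_map_of_mem (Q : Subgroup G).subtype htransfer
  rw [map_subtype_commutator] at htransfer
  obtain ⟨n, hn⟩ := hx
  have hcop : (Q : Subgroup G).index.Coprime (orderOf x) :=
    hn ▸ (Nat.Coprime.pow_left n ((hp.out.coprime_iff_not_dvd).mpr Q.not_dvd_index)).symm
  obtain ⟨m, hm⟩ := exists_pow_eq_self_of_coprime hcop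
  exact hm ▸ pow_mem htransfer m

theorem exists_sylow_mem_commutator_of_le_centralizer [Finite G] [Fact p.Prime]
    {H : Subgroup G} {x : G} (hHx : H ≤ centralizer {x}) (hx : IsPElement p x)
    (hxH : x ∈ ⁅H, H⁆) : ∃ Q : Sylow p G, x ∈ ⁅(Q : Subgroup G), (Q : Subgroup G)⁆ := by
  rw [← map_subtype_commutator] at hxH
  obtain ⟨y, hy, rfl⟩ := hxH
  have hyc : y ∈ center H := mem_center_iff.mpr fun h =>
    Subtype.ext (mem_centralizer_iff.mp (hHx h.2) y rfl).symm
  have hyp : IsPElement p y := by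
    obtain ⟨n, hn⟩ := hx
    exact ⟨n, (orderOf_coe y).symm.trans hn⟩
  obtain ⟨R⟩ : Nonempty (Sylow p H) := inferInstance
  obtain ⟨Q, hRQ⟩ := (R.2.map H.subtype).exists_le_sylow
  refine ⟨Q, commutator_mono hRQ hRQ ?_⟩
  rw [← map_commutator]
  exact mem_map_of_mem _ (R.mem_commutator_of_mem_center_of_mem_commutator hyc hyp hy)

end

theorem nonSchur_of_commutator_le_normal_psubgroup (p : ℕ) (hp : p.Prime) (G : Type*) [Group G]
    [Finite G] (P : Sylow p G) (N : Subgroup G) [N.Normal] (hN : IsPGroup p N)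
    (hPN : ⁅(P : Subgroup G), (P : Subgroup G)⁆ ≤ N) (hdvd : p ∣ Nat.card G) :
    ∃ x : G, IsPElement p x ∧ IsNonSchur x := by
  have := Fact.mk hp
  by_contra! hSchur
  have hsylow (x : G) (hx : IsPElement p x) :
      ∃ Q : Sylow p G, x ∈ ⁅(Q : Subgroup G), (Q : Subgroup G)⁆ :=
    exists_sylow_mem_commutator_of_le_centralizer le_rfl hx (not_not.mp (hSchur x hx))
  have hmemN (x : G) (hx : IsPElement p x) : x ∈ N := by
    obtain ⟨Q, hQ⟩ := hsylow x hx
    exact Sylow.commutator_le_of_normal hPN Q hQ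
  have hsylow_le (Q : Sylow p G) : (Q : Subgroup G) ≤ N := fun x hx =>
    hmemN x (Q.2.isPElement_of_mem hx)
  have hperfect : N ≤ ⁅N, N⁆ := fun x hx => by
    obtain ⟨Q, hQ⟩ := hsylow x (hN.isPElement_of_mem hx)
    exact commutator_mono (hsylow_le Q) (hsylow_le Q) hQ
  obtain ⟨g, hg⟩ := exists_prime_orderOf_dvd_card' p hdvd
  have hg1 : g = 1 := by
    simpa [hN.eq_bot_of_le_commutator hperfect] using hmemN g ⟨1, by rw [hg, pow_one]⟩
  rw [hg1, orderOf_one] at hg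
  exact hp.ne_one hg.symm
end
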